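/- Let s, r, p be points in the Euclidean plane with 0 < dist(s,r) < dist(s,p) and with the angle ∠(s r p) at r strictly less than π/2. Let b be the point on the ray from s through r at distance dist(s,p) from s (explicitly, b = s + (dist(s,p)/dist(s,r))·(r − s)). Then dist(p,b) = 2·dist(s,p)·sin(∠(r s p)/2) and dist(p,r) < dist(p,b). -/

import Mathlib

/-!
Since `dist s r < dist s p`, the point `b` lies on the ray from `s` through `r`, strictly beyond
`r`. Hence the triangle `s p b` is isosceles with apex angle `∠ r s p`, which gives the chord
length, and the angle of the triangle `p r b` at `r` is the supplement of the acute angle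
`∠ s r p`, so the side `p b` opposite it is the longest one.
-/

open EuclideanGeometry Real

namespace EuclideanGeometry

variable {V P : Type*} [NormedAddCommGroup V] [InnerProductSpace ℝ V] [MetricSpace P]
  [NormedAddTorsor V P]

theorem dist_eq_two_mul_dist_mul_sin_half_angle_of_dist_eq {a b c : P}
    (h : dist a b = dist a c) : dist b c = 2 * dist a b * sin (∠ b a c / 2) := by
  have hsin : 0 ≤ sin (∠ b a c / 2) :=
    sin_nonneg_of_nonneg_of_le_pi (by linarith [angle_nonneg b a c])
      (by linarith [angle_le_pi b a c, pi_pos])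
  have hcos : cos (∠ b a c) = 1 - 2 * sin (∠ b a c / 2) ^ 2 := by
    rw [← cos_two_mul_eq_one_sub, mul_div_cancel₀ _ two_ne_zero]
  have hsq : dist b c ^ 2 = (2 * dist a b * sin (∠ b a c / 2)) ^ 2 := by
    rw [sq, law_cos b a c, dist_comm b a, dist_comm c a, ← h, hcos]; ring
  exact (pow_left_inj₀ dist_nonneg (by positivity) two_ne_zero).mp hsq

theorem dist_lt_dist_of_pi_div_two_le_angle {a b c : P} (h : π / 2 ≤ ∠ a b c) (hcb : c ≠ b) :
    dist a b < dist a c := by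
  have hcos : cos (∠ a b c) ≤ 0 :=
    cos_nonpos_of_pi_div_two_le_of_le h (by linarith [angle_le_pi a b c, pi_pos])
  have hsq : dist a b ^ 2 < dist a c ^ 2 := by
    have hcb' : 0 < dist c b := dist_pos.mpr hcb
    nlinarith [law_cos a b c, mul_nonneg (mul_nonneg (dist_nonneg (x := a) (y := b)) hcb'.le)
      (neg_nonneg.mpr hcos)]
  exact lt_of_pow_lt_pow_left₀ 2 dist_nonneg hsq

theorem _root_.Sbtw.dist_lt_dist_of_angle_le_pi_div_two {s r b : P} (p : P) (h : Sbtw ℝ s r b)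
    (hangle : ∠ s r p ≤ π / 2) : dist p r < dist p b := by
  have hsupp : ∠ p r s + ∠ p r b = π := angle_add_angle_eq_pi_of_angle_eq_pi p h.angle₁₂₃_eq_pi
  refine dist_lt_dist_of_pi_div_two_le_angle ?_ h.right_ne
  rw [angle_comm] at hangle
  linarith

end EuclideanGeometry

theorem stmt_9 (s r p : EuclideanSpace ℝ (Fin 2))
    (h0 : 0 < dist s r) (h1 : dist s r < dist s p)
    (hangle : ∠ s r p < π / 2)
    (b : EuclideanSpace ℝ (Fin 2))
    (hb : b = s + (dist s p / dist s r) • (r - s)) :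
    dist p b = 2 * dist s p * Real.sin (∠ r s p / 2) ∧ dist p r < dist p b := by
  set t := dist s p / dist s r
  have hb_lineMap : b = AffineMap.lineMap s r t := by
    rw [hb, AffineMap.lineMap_apply_module', add_comm]
  have hsrb : Sbtw ℝ s r b :=
    sbtw_iff_left_ne_and_right_mem_image_Ioi.mpr
      ⟨dist_pos.mp h0, t, (one_lt_div h0).mpr h1, hb_lineMap.symm⟩
  have hsb : dist s p = dist s b := by
    rw [hb_lineMap, dist_left_lineMap, Real.norm_of_nonneg (by positivity)]
    exact (div_mul_cancel₀ _ h0.ne').symm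
  refine ⟨?_, hsrb.dist_lt_dist_of_angle_le_pi_div_two p hangle.le⟩
  rw [dist_eq_two_mul_dist_mul_sin_half_angle_of_dist_eq hsb, angle_comm, hsrb.angle_eq_left p]
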